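/- Suppose the complex-valued functions n, m, l, j on {|s| ≤ t < T} satisfy the two algebraic relations c₁[l - (i/2)g₀m] + (π/4)𝒜⁻¹n = 0 and c₁[j + (i/2)ḡ₀l + ((i/8)|g₀|²ḡ₀ + (1/4)ḡ₁)n] + (π/4)𝒜⁻¹m + (πi/8)ḡ₀𝒜⁻¹n = 0 (all evaluated at (t,s)), together with the ODE system n_t - n_s = 2iΔ₂n + α₁m + 2g₀j and m_t + m_s = α₂n + ᾱ₁l, where α₁ = (1/2)(|g₀|²g₀ + 2ig₁) and α₂ = (1/4)(|g₀|⁴ḡ₀ + iḡ₀²g₁ - 2iḡ_{0t}) and Δ₂ = (3/4)|g₀|⁴ - (i/2)(ḡ₁g₀ - ḡ₀g₁) is real. Then n and m satisfy the closed system n_t - n_s = β₁n + β₂m + β₃𝒜⁻¹m and m_t + m_s = β₄m + β₅n + β₆𝒜⁻¹n, with β₁ = (5i/4)|g₀|⁴ + (1/2)g₀ḡ₁ - ḡ₀g₁, β₂ = |g₀|²g₀ + ig₁, β₃ = -πg₀/(2c₁), β₄ = (1/4)(i|g₀|⁴ + 2g₀ḡ₁), β₅ = (1/4)(|g₀|⁴ḡ₀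 + iḡ₀²g₁ - 2iḡ_{0t}), β₆ = -(π/(8c₁))(|g₀|²ḡ₀ - 2iḡ₁). -/

import Mathlib

/-!
Since `c₁ ≠ 0`, the first relation expresses `l` through `m` and `𝒜⁻¹n`, and the second then
expresses `j` through `n`, `m`, `𝒜⁻¹n` and `𝒜⁻¹m`. Substituting these into the ODEs for `n` and
`m` leaves a closed linear system; collecting coefficients (using `i² = -1`) gives the `βₖ`.
The elimination is pointwise and uses nothing about `π` and `c₁` beyond `c₁ ≠ 0`.
-/

open Complex

/-- The constant `c₁ = √π e^{-iπ/4}/(2√2)`. -/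
noncomputable def c1 : ℂ :=
  (Real.sqrt Real.pi : ℂ) * Complex.exp (-(Real.pi : ℂ) * Complex.I / 4) /
    (2 * (Real.sqrt 2 : ℂ))

open ComplexConjugate

lemma c1_ne_zero : c1 ≠ 0 := by
  simp [c1, Complex.exp_ne_zero, Real.sqrt_ne_zero', Real.pi_pos]

section Elimination

variable {c p g₀ g₁ n m l j An Am : ℂ}

lemma eq_of_globalRelation₁ (hc : c ≠ 0)
    (h : c * (l - I / 2 * g₀ * m) + p / 4 * An = 0) :
    l = I / 2 * g₀ * m - p / (4 * c) * An := by
  field_simp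
  linear_combination 8 * h

lemma eq_of_globalRelation₂ (hc : c ≠ 0)
    (h : c * (j + I / 2 * conj g₀ * l +
        (I / 8 * (g₀ * conj g₀) * conj g₀ + 1 / 4 * conj g₁) * n) +
      p / 4 * Am + p * I / 8 * conj g₀ * An = 0) :
    j = -(I / 2) * conj g₀ * l - (I / 8 * (g₀ * conj g₀) * conj g₀ + 1 / 4 * conj g₁) * n -
      p / (4 * c) * Am - p * I / (8 * c) * conj g₀ * An := by
  field_simp
  linear_combination 64 * h

lemma closed_n_eq {Dn : ℂ}
    (hl : l = I / 2 * g₀ * m - p / (4 * c) * An)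
    (hj : j = -(I / 2) * conj g₀ * l -
      (I / 8 * (g₀ * conj g₀) * conj g₀ + 1 / 4 * conj g₁) * n -
      p / (4 * c) * Am - p * I / (8 * c) * conj g₀ * An)
    (h : Dn = 2 * I * (3 / 4 * (g₀ * conj g₀) ^ 2 - I / 2 * (conj g₁ * g₀ - conj g₀ * g₁)) * n +
      1 / 2 * (g₀ * conj g₀ * g₀ + 2 * I * g₁) * m + 2 * g₀ * j) :
    Dn = (5 * I / 4 * (g₀ * conj g₀) ^ 2 + 1 / 2 * g₀ * conj g₁ - conj g₀ * g₁) * n +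
      (g₀ * conj g₀ * g₀ + I * g₁) * m + -p * g₀ / (2 * c) * Am := by
  subst hj hl
  linear_combination h + (n * (conj g₀ * g₁ - g₀ * conj g₁) - 1 / 2 * g₀ ^ 2 * conj g₀ * m) * I_sq

lemma closed_m_eq {Dm g₀' : ℂ}
    (hl : l = I / 2 * g₀ * m - p / (4 * c) * An)
    (h : Dm = 1 / 4 * ((g₀ * conj g₀) ^ 2 * conj g₀ + I * conj g₀ ^ 2 * g₁ -
        2 * I * conj g₀') * n +
      conj (1 / 2 * (g₀ * conj g₀ * g₀ + 2 * I * g₁)) * l) :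
    Dm = 1 / 4 * (I * (g₀ * conj g₀) ^ 2 + 2 * g₀ * conj g₁) * m +
      1 / 4 * ((g₀ * conj g₀) ^ 2 * conj g₀ + I * conj g₀ ^ 2 * g₁ - 2 * I * conj g₀') * n +
      -(p / (8 * c)) * (g₀ * conj g₀ * conj g₀ - 2 * I * conj g₁) * An := by
  subst hl
  simp only [map_mul, map_add, map_div₀, map_one, map_ofNat, conj_I, conj_conj] at h
  linear_combination h - 1 / 2 * g₀ * conj g₁ * m * I_sq

end Elimination

/-- `An` and `Am` stand for `𝒜⁻¹n` and `𝒜⁻¹m`. -/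
theorem glm_elimination (T : ℝ) (g0 g1 : ℝ → ℂ) (n m l j An Am : ℝ → ℝ → ℂ)
    -- `c₁[l - (i/2)g₀m] + (π/4)𝒜⁻¹n = 0`
    (h1 : ∀ t s : ℝ, |s| ≤ t → t < T →
      c1 * (l t s - (Complex.I / 2) * g0 t * m t s) + (Real.pi / 4 : ℂ) * An t s = 0)
    -- `c₁[j + (i/2)ḡ₀l + ((i/8)|g₀|²ḡ₀ + (1/4)ḡ₁)n] + (π/4)𝒜⁻¹m + (πi/8)ḡ₀𝒜⁻¹n = 0`
    (h2 : ∀ t s : ℝ, |s| ≤ t → t < T →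
      c1 * (j t s + (Complex.I / 2) * (starRingEnd ℂ) (g0 t) * l t s +
          ((Complex.I / 8) * (g0 t * (starRingEnd ℂ) (g0 t)) * (starRingEnd ℂ) (g0 t) +
            (1 / 4 : ℂ) * (starRingEnd ℂ) (g1 t)) * n t s) +
        (Real.pi / 4 : ℂ) * Am t s +
        (Real.pi * Complex.I / 8 : ℂ) * (starRingEnd ℂ) (g0 t) * An t s = 0)
    -- `n_t - n_s = 2iΔ₂n + α₁m + 2g₀j`, with
    -- `Δ₂ = (3/4)|g₀|⁴ - (i/2)(ḡ₁g₀ - ḡ₀g₁)` and `α₁ = (1/2)(|g₀|²g₀ + 2ig₁)`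
    (hn : ∀ t s : ℝ, |s| ≤ t → t < T →
      deriv (fun τ => n τ s) t - deriv (fun σ => n t σ) s =
        2 * Complex.I *
          ((3 / 4 : ℂ) * (g0 t * (starRingEnd ℂ) (g0 t)) ^ 2 -
            (Complex.I / 2) * ((starRingEnd ℂ) (g1 t) * g0 t -
              (starRingEnd ℂ) (g0 t) * g1 t)) * n t s +
        (1 / 2 : ℂ) * (g0 t * (starRingEnd ℂ) (g0 t) * g0 t + 2 * Complex.I * g1 t) *
          m t s +
        2 * g0 t * j t s)
    -- `m_t + m_s = α₂n + ᾱ₁l`, with `α₂ = (1/4)(|g₀|⁴ḡ₀ + iḡ₀²g₁ - 2iḡ_{0t})`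
    (hm : ∀ t s : ℝ, |s| ≤ t → t < T →
      deriv (fun τ => m τ s) t + deriv (fun σ => m t σ) s =
        (1 / 4 : ℂ) * ((g0 t * (starRingEnd ℂ) (g0 t)) ^ 2 * (starRingEnd ℂ) (g0 t) +
            Complex.I * ((starRingEnd ℂ) (g0 t)) ^ 2 * g1 t -
            2 * Complex.I * (starRingEnd ℂ) (deriv g0 t)) * n t s +
        (starRingEnd ℂ)
          ((1 / 2 : ℂ) * (g0 t * (starRingEnd ℂ) (g0 t) * g0 t + 2 * Complex.I * g1 t)) *
          l t s) :
    ∀ t s : ℝ, |s| ≤ t → t < T →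
      -- `n_t - n_s = β₁n + β₂m + β₃𝒜⁻¹m`
      (deriv (fun τ => n τ s) t - deriv (fun σ => n t σ) s =
        ((5 * Complex.I / 4) * (g0 t * (starRingEnd ℂ) (g0 t)) ^ 2 +
          (1 / 2 : ℂ) * g0 t * (starRingEnd ℂ) (g1 t) -
          (starRingEnd ℂ) (g0 t) * g1 t) * n t s +
        (g0 t * (starRingEnd ℂ) (g0 t) * g0 t + Complex.I * g1 t) * m t s +
        (-(Real.pi : ℂ) * g0 t / (2 * c1)) * Am t s) ∧
      -- `m_t + m_s = β₄m + β₅n + β₆𝒜⁻¹n`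
      (deriv (fun τ => m τ s) t + deriv (fun σ => m t σ) s =
        (1 / 4 : ℂ) * (Complex.I * (g0 t * (starRingEnd ℂ) (g0 t)) ^ 2 +
          2 * g0 t * (starRingEnd ℂ) (g1 t)) * m t s +
        (1 / 4 : ℂ) * ((g0 t * (starRingEnd ℂ) (g0 t)) ^ 2 * (starRingEnd ℂ) (g0 t) +
          Complex.I * ((starRingEnd ℂ) (g0 t)) ^ 2 * g1 t -
          2 * Complex.I * (starRingEnd ℂ) (deriv g0 t)) * n t s +
        (-(Real.pi / (8 * c1)) * (g0 t * (starRingEnd ℂ) (g0 t) * (starRingEnd ℂ) (g0 t) -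
          2 * Complex.I * (starRingEnd ℂ) (g1 t))) * An t s) := by
  intro t s hs ht
  have hl := eq_of_globalRelation₁ c1_ne_zero (h1 t s hs ht)
  have hj := eq_of_globalRelation₂ c1_ne_zero (h2 t s hs ht)
  exact ⟨closed_n_eq hl hj (hn t s hs ht), closed_m_eq hl (hm t s hs ht)⟩
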